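/- Let ω ∈ ℱ¹(ℙⁿ,e) be such that J(ω) is a radical ideal of S. Then (J(ω) : I(ω)) = (J(ω) : K(ω)) = L(ω). In particular, the annihilator of the S-module I(ω)/J(ω) equals L(ω), so the minimal primes of the support of I(ω)/J(ω) coincide with the minimal primes over L(ω) (the minimal components of S/L(ω)). -/

import Mathlib

open MvPolynomial

noncomputable section

abbrev PolyS (n : ℕ) := MvPolynomial (Fin (n+1)) ℂ

/-- The coefficient of `dω` at `dx_i ∧ dx_j`, where `ω` is the 1-form `Σ ω i dx_i`. -/
def dcoeff {n : ℕ} (ω : Fin (n+1) → PolyS n) (i j : Fin (n+1)) : PolyS n :=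
  pderiv i (ω j) - pderiv j (ω i)

/-- Integrability `ω ∧ dω = 0`, written in coordinates. -/
def Integrable {n : ℕ} (ω : Fin (n+1) → PolyS n) : Prop :=
  ∀ i j k, ω i * dcoeff ω j k - ω j * dcoeff ω i k + ω k * dcoeff ω i j = 0

/-- The singular ideal `J(ω)`, generated by the coefficients of `ω`. -/
def Jideal {n : ℕ} (ω : Fin (n+1) → PolyS n) : Ideal (PolyS n) :=
  Ideal.span (Set.range ω)

/-- The ideal `𝒞(dω)` of coefficients of `dω`. -/
def Cdiff {n : ℕ} (ω : Fin (n+1) → PolyS n) : Ideal (PolyS n) :=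
  Ideal.span {g | ∃ i j, g = dcoeff ω i j}

/-- The unfoldings ideal `I(ω) = {h : h·dω = ω ∧ η for some 1-form η}`. -/
def Iideal {n : ℕ} (ω : Fin (n+1) → PolyS n) : Ideal (PolyS n) where
  carrier := {h | ∃ η : Fin (n+1) → PolyS n,
    ∀ i j, h * dcoeff ω i j = ω i * η j - ω j * η i}
  add_mem' := by
    rintro a b ⟨η, hη⟩ ⟨ξ, hξ⟩
    exact ⟨η + ξ, fun i j => by
      simp only [Pi.add_apply]
      linear_combination hη i j + hξ i j⟩
  zero_mem' := ⟨0, fun i j => by simp⟩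
  smul_mem' := by
    rintro c a ⟨η, hη⟩
    exact ⟨c • η, fun i j => by
      simp only [smul_eq_mul, Pi.smul_apply]
      linear_combination c * hη i j⟩

/-- The Kupka ideal `K(ω) = (J(ω) : 𝒞(dω))`. -/
def Kideal {n : ℕ} (ω : Fin (n+1) → PolyS n) : Ideal (PolyS n) :=
  (Jideal ω).colon (Cdiff ω)

/-- The non-Kupka ideal `L(ω) = (J(ω) : K(ω)^∞)`. -/
def Lideal {n : ℕ} (ω : Fin (n+1) → PolyS n) : Ideal (PolyS n) :=
  ⨆ d : ℕ, (Jideal ω).colon ((Kideal ω) ^ (d+1) : Ideal (PolyS n))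

/-- The irrelevant ideal `(x_0, …, x_n)`. -/
def irrelevant (n : ℕ) : Ideal (PolyS n) := Ideal.span (Set.range X)

/-- `height I ≥ k` : every prime containing `I` has height at least `k`. -/
def heightGE {n : ℕ} (I : Ideal (PolyS n)) (k : ℕ) : Prop :=
  ∀ p : PrimeSpectrum (PolyS n), I ≤ p.asIdeal → (k : ℕ∞) ≤ Order.height p

/-- `ω ∈ ℱ¹(ℙⁿ, e)` : a foliation one-form of degree `e` on `ℙⁿ`. -/
def IsFoliation (n e : ℕ) (ω : Fin (n+1) → PolyS n) : Prop :=
  ω ≠ 0 ∧ 2 ≤ e ∧ (∀ i, (ω i).IsHomogeneous (e-1)) ∧ Integrable ω ∧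
  (∑ i, X i * ω i = 0) ∧ heightGE (Jideal ω) 2

/-- A homogeneous ideal: stable under taking homogeneous components. -/
def IsHomogIdeal {n : ℕ} (p : Ideal (PolyS n)) : Prop :=
  ∀ h ∈ p, ∀ d : ℕ, homogeneousComponent d h ∈ p

/-- A relevant prime: a homogeneous prime different from the irrelevant ideal. -/
def IsRelevantPrime {n : ℕ} (p : Ideal (PolyS n)) : Prop :=
  p.IsPrime ∧ IsHomogIdeal p ∧ p ≠ irrelevant n

/-- A relevant prime `p` is a division point of `ω` iff `I(ω) ⊄ p`. -/
def DivisionPoint {n : ℕ} (ω : Fin (n+1) → PolyS n) (p : Ideal (PolyS n)) : Prop :=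
  ¬ (Iideal ω ≤ p)

/-- The class `𝒰`. -/
def InU {n : ℕ} (ω : Fin (n+1) → PolyS n) : Prop :=
  ∀ p : Ideal (PolyS n), IsRelevantPrime p → ¬ (Kideal ω ≤ p) → DivisionPoint ω p

/-!
Since `J` is radical, `(J : K^d) = (J : K)` for `d ≥ 1`, so `L = (J : K)`, and `I ⊆ K` gives
`(J : K) ⊆ (J : I)`. Conversely, `J` is the intersection of its minimal primes `p`, so it is
enough that at each of them `K ⊆ p` or `I ⊄ p`. If `𝒞(dω) ⊄ p` then `K = (J : 𝒞(dω)) ⊆ p`.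
If `𝒞(dω) ⊆ p`, localize at `p`: then `J S_p = p S_p`, and `p S_p` is generated by a sequence
`f₀, …, f_{m-1}` with every `(f₀, …, f_{k-1})` prime (built one variable at a time, adjoining a
polynomial of least degree and pseudo-dividing by it). Along such a chain of primes, the
contractions of `ω ∧ dω = 0` let one descend from `dω ≡ 0 mod p S_p` to `dω = ω ∧ η`, as in
the de Rham–Saito division lemma. Clearing denominators gives `b ∉ p` with `b • dω = ω ∧ η'`,
that is `b ∈ I \ p`.
-/

open Matrix

section Wedge

variable {R : Type*} [CommRing R] {ι : Type*}

/- Coordinates of `ω ∧ η` at `dxᵢ ∧ dxⱼ`, and of `ω ∧ μ` at `dxᵢ ∧ dxⱼ ∧ dxₖ` for the 2-form with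
coefficients `μ i j`: `Integrable ω` is `wedge₂ ω (dcoeff ω) = 0`, and `h ∈ Iideal ω` says
`h * dcoeff ω = wedge ω η`. -/
def wedge (ω η : ι → R) (i j : ι) : R := ω i * η j - ω j * η i

def wedge₂ (ω : ι → R) (μ : ι → ι → R) (i j k : ι) : R :=
  ω i * μ j k - ω j * μ i k + ω k * μ i j

variable {ω : ι → R} {μ : ι → ι → R}

theorem exists_wedge₂_mem_of_sub_wedge_mem {P : Ideal R} (hP : P.IsPrime)
    (hμ : ∀ i j k, wedge₂ ω μ i j k = 0) {η : ι → R} {g : R} (hg : g ∉ P)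
    (h : ∀ i j, μ i j - wedge ω η i j ∈ P ⊔ Ideal.span {g}) :
    ∃ p ν : ι → ι → R, (∀ i j, p i j ∈ P) ∧ (∀ i j, μ i j - wedge ω η i j = p i j + g * ν i j) ∧
      ∀ i j k, wedge₂ ω ν i j k ∈ P := by
  choose p hp y hy hpy using fun i j => Submodule.mem_sup.mp (h i j)
  choose ν hν using fun i j => Ideal.mem_span_singleton'.mp (hy i j)
  have hdec : ∀ i j, μ i j - wedge ω η i j = p i j + g * ν i j := fun i j => by
    rw [← hpy, ← hν, mul_comm]
  refine ⟨p, ν, hp, hdec, fun i j l => (hP.mem_or_mem ?_).resolve_left hg⟩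
  -- `ω ∧ (μ - ω ∧ η) = 0` since `ω ∧ ω = 0`
  have key : g * wedge₂ ω ν i j l = -(ω i * p j l - ω j * p i l + ω l * p i j) := by
    have h₁ := hdec j l; have h₂ := hdec i l; have h₃ := hdec i j; have h₀ := hμ i j l
    simp only [wedge₂, wedge] at h₀ h₁ h₂ h₃ ⊢
    linear_combination h₀ - ω i * h₁ + ω j * h₂ - ω l * h₃
  rw [key]
  exact P.neg_mem (P.add_mem (P.sub_mem (P.mul_mem_left _ (hp j l)) (P.mul_mem_left _ (hp i l)))
    (P.mul_mem_left _ (hp i j)))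

variable [Fintype ι] {P : Ideal R}

theorem dotProduct_mem (ξ : ι → R) {v : ι → R} (hv : ∀ i, v i ∈ P) : ξ ⬝ᵥ v ∈ P :=
  Ideal.sum_mem _ fun i _ => P.mul_mem_left _ (hv i)

/- `ξ ⬝ᵥ ω` and `ξ ᵥ* μ` are the interior products `ι_ξ ω` and `ι_ξ μ`; the next three lemmas
are `ι_ξ`, `ι_ζ ι_ξ` and `ι_θ ι_ζ ι_ξ` applied to `ω ∧ μ`. -/
theorem contract_wedge₂_mem (hμ : ∀ i j k, wedge₂ ω μ i j k ∈ P) (ξ : ι → R) (i j : ι) :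
    (ξ ⬝ᵥ ω) * μ i j - wedge ω (ξ ᵥ* μ) i j ∈ P := by
  have key : (ξ ⬝ᵥ ω) * μ i j - wedge ω (ξ ᵥ* μ) i j = ξ ⬝ᵥ fun a => wedge₂ ω μ a i j := by
    simp only [wedge, wedge₂, dotProduct, vecMul, Finset.mul_sum, Finset.sum_mul,
      ← Finset.sum_sub_distrib]
    exact Finset.sum_congr rfl fun a _ => by ring
  exact key ▸ dotProduct_mem ξ fun a => hμ a i j

theorem contract₂_wedge₂_mem (hμ : ∀ i j k, wedge₂ ω μ i j k ∈ P) (ξ ζ : ι → R) (j : ι) :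
    (ξ ⬝ᵥ ω) * (ζ ᵥ* μ) j - (ζ ⬝ᵥ ω) * (ξ ᵥ* μ) j + ω j * (ζ ⬝ᵥ (ξ ᵥ* μ)) ∈ P := by
  have key : (ξ ⬝ᵥ ω) * (ζ ᵥ* μ) j - (ζ ⬝ᵥ ω) * (ξ ᵥ* μ) j + ω j * (ζ ⬝ᵥ (ξ ᵥ* μ)) =
      ζ ⬝ᵥ fun b => (ξ ⬝ᵥ ω) * μ b j - wedge ω (ξ ᵥ* μ) b j := by
    generalize ξ ⬝ᵥ ω = s
    generalize ξ ᵥ* μ = c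
    simp only [wedge, dotProduct, vecMul, Finset.mul_sum, Finset.sum_mul,
      ← Finset.sum_sub_distrib, ← Finset.sum_add_distrib]
    exact Finset.sum_congr rfl fun a _ => by ring
  exact key ▸ dotProduct_mem ζ fun b => contract_wedge₂_mem hμ ξ b j

theorem contract₃_wedge₂_mem (hμ : ∀ i j k, wedge₂ ω μ i j k ∈ P) (ξ ζ θ : ι → R) :
    (ξ ⬝ᵥ ω) * (θ ⬝ᵥ (ζ ᵥ* μ)) - (ζ ⬝ᵥ ω) * (θ ⬝ᵥ (ξ ᵥ* μ))
      + (θ ⬝ᵥ ω) * (ζ ⬝ᵥ (ξ ᵥ* μ)) ∈ P := by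
  have key : (ξ ⬝ᵥ ω) * (θ ⬝ᵥ (ζ ᵥ* μ)) - (ζ ⬝ᵥ ω) * (θ ⬝ᵥ (ξ ᵥ* μ))
      + (θ ⬝ᵥ ω) * (ζ ⬝ᵥ (ξ ᵥ* μ)) = θ ⬝ᵥ fun j =>
        (ξ ⬝ᵥ ω) * (ζ ᵥ* μ) j - (ζ ⬝ᵥ ω) * (ξ ᵥ* μ) j + ω j * (ζ ⬝ᵥ (ξ ᵥ* μ)) := by
    generalize ξ ⬝ᵥ ω = s
    generalize ζ ⬝ᵥ ω = s'
    generalize ζ ⬝ᵥ (ξ ᵥ* μ) = e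
    generalize ξ ᵥ* μ = c
    generalize ζ ᵥ* μ = d
    simp only [dotProduct, Finset.mul_sum, Finset.sum_mul, ← Finset.sum_sub_distrib,
      ← Finset.sum_add_distrib]
    exact Finset.sum_congr rfl fun a _ => by ring
  exact key ▸ dotProduct_mem θ fun j => contract₂_wedge₂_mem hμ ξ ζ j

end Wedge

section PrimeSequence

variable {R : Type*} [CommRing R]

def prefixSpan (f : ℕ → R) (k : ℕ) : Ideal R := Ideal.span (f '' Set.Iio k)

variable {f : ℕ → R}

@[simp]
theorem prefixSpan_zero : prefixSpan f 0 = ⊥ := by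
  simp [prefixSpan]

theorem prefixSpan_succ (k : ℕ) : prefixSpan f (k + 1) = prefixSpan f k ⊔ Ideal.span {f k} := by
  have : Set.Iio (k + 1) = insert k (Set.Iio k) := by
    ext; simp
  rw [prefixSpan, this, Set.image_insert_eq, Ideal.span_insert, sup_comm, prefixSpan]

theorem prefixSpan_mono : Monotone (prefixSpan f) :=
  fun _ _ hkl => Ideal.span_mono (Set.image_mono (Set.Iio_subset_Iio hkl))

theorem apply_mem_prefixSpan {j k : ℕ} (h : j < k) : f j ∈ prefixSpan f k :=
  Ideal.subset_span ⟨j, h, rfl⟩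

theorem map_prefixSpan {S G : Type*} [CommRing S] [FunLike G R S] [RingHomClass G R S] (φ : G)
    (k : ℕ) :
    (prefixSpan f k).map φ = prefixSpan (φ ∘ f) k := by
  rw [prefixSpan, Ideal.map_span, ← Set.image_comp, prefixSpan]

theorem prefixSpan_congr {g : ℕ → R} {k : ℕ} (h : ∀ j < k, f j = g j) :
    prefixSpan f k = prefixSpan g k := by
  unfold prefixSpan
  congr 1
  exact Set.image_congr h

structure IsPrimeSequence (f : ℕ → R) (m : ℕ) : Prop where
  isPrime : ∀ k ≤ m, (prefixSpan f k).IsPrime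
  notMem : ∀ k < m, f k ∉ prefixSpan f k

end PrimeSequence

section Division

variable {R : Type*} [CommRing R] {ι : Type*} [Fintype ι] {ω : ι → R}

theorem exists_wedge_sub_mem_of_contract {P : Ideal R} (hP : P.IsPrime) {ν : ι → ι → R}
    (hν : ∀ i j k, wedge₂ ω ν i j k ∈ P) {ξ : ι → R} {u : R} (hu : ξ ⬝ᵥ ω = u) (huP : u ∉ P)
    {β : R} (hβ : ∀ l, (ξ ᵥ* ν) l - β * ω l ∈ P ⊔ Ideal.span {u}) :
    ∃ χ : ι → R, ∀ i j, ν i j - wedge ω χ i j ∈ P := by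
  choose p hp t ht hpt using fun l => Submodule.mem_sup.mp (hβ l)
  choose χ hχ using fun l => Ideal.mem_span_singleton'.mp (ht l)
  refine ⟨χ, fun i j => (hP.mem_or_mem ?_).resolve_left huP⟩
  have key : u * (ν i j - wedge ω χ i j)
      = (u * ν i j - wedge ω (ξ ᵥ* ν) i j) + (ω i * p j - ω j * p i) := by
    have hi := hpt i; have hj := hpt j
    rw [← hχ i] at hi; rw [← hχ j] at hj
    simp only [wedge]
    linear_combination ω j * hi - ω i * hj
  rw [key]
  refine P.add_mem (hu ▸ contract_wedge₂_mem hν ξ i j) (P.sub_mem ?_ ?_) <;>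
    exact P.mul_mem_left _ (hp _)

theorem exists_contract_sub_mem {P : Ideal R} {ν : ι → ι → R}
    (hν : ∀ i j k, wedge₂ ω ν i j k ∈ P) {ξ ζ : ι → R} {u v : R} (hu : ξ ⬝ᵥ ω = u)
    (hv : ζ ⬝ᵥ ω = v) (hPu : (P ⊔ Ideal.span {u}).IsPrime) (hvPu : v ∉ P ⊔ Ideal.span {u})
    (hc : ζ ⬝ᵥ (ξ ᵥ* ν) ∈ P ⊔ Ideal.span {u} ⊔ Ideal.span {v}) :
    ∃ β : R, ∀ l, (ξ ᵥ* ν) l - β * ω l ∈ P ⊔ Ideal.span {u} := by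
  obtain ⟨w, hw, y, hy, hwy⟩ := Submodule.mem_sup.mp hc
  obtain ⟨p, hp, x, hx, hpx⟩ := Submodule.mem_sup.mp hw
  obtain ⟨α, rfl⟩ := Ideal.mem_span_singleton'.mp hx
  obtain ⟨β, rfl⟩ := Ideal.mem_span_singleton'.mp hy
  refine ⟨β, fun l => (hPu.mem_or_mem ?_).resolve_left hvPu⟩
  have key : v * ((ξ ᵥ* ν) l - β * ω l) = u * (ζ ᵥ* ν) l + ω l * p + (ω l * α) * u
      - (u * (ζ ᵥ* ν) l - v * (ξ ᵥ* ν) l + ω l * (ζ ⬝ᵥ (ξ ᵥ* ν))) := by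
    rw [← hwy, ← hpx]; ring
  rw [key]
  refine Ideal.sub_mem _ (Ideal.add_mem _ (Ideal.add_mem _ ?_ ?_) ?_) ?_
  · exact Ideal.mem_sup_right (Ideal.mul_mem_right _ _ (Ideal.mem_span_singleton_self u))
  · exact Ideal.mem_sup_left (P.mul_mem_left _ hp)
  · exact Ideal.mem_sup_right (Ideal.mul_mem_left _ _ (Ideal.mem_span_singleton_self u))
  · exact Ideal.mem_sup_left (hu ▸ hv ▸ contract₂_wedge₂_mem hν ξ ζ l)

theorem exists_wedge_sub_mem_of_contract₂ {P : Ideal R} (hP : P.IsPrime) {ν : ι → ι → R}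
    (hν : ∀ i j k, wedge₂ ω ν i j k ∈ P) {ξ ζ : ι → R} {u v : R} (hu : ξ ⬝ᵥ ω = u)
    (hv : ζ ⬝ᵥ ω = v) (huP : u ∉ P) (hPu : (P ⊔ Ideal.span {u}).IsPrime)
    (hvPu : v ∉ P ⊔ Ideal.span {u})
    (hc : ζ ⬝ᵥ (ξ ᵥ* ν) ∈ P ⊔ Ideal.span {u} ⊔ Ideal.span {v}) :
    ∃ χ : ι → R, ∀ i j, ν i j - wedge ω χ i j ∈ P :=
  have ⟨_, hβ⟩ := exists_contract_sub_mem hν hu hv hPu hvPu hc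
  exists_wedge_sub_mem_of_contract hP hν hu huP hβ

theorem contract₂_mem_of_contract₃ {P : Ideal R} (hP : P.IsPrime) {ν : ι → ι → R}
    (hν : ∀ i j k, wedge₂ ω ν i j k ∈ P) {ξ ζ θ : ι → R} {u v w : R} (hu : ξ ⬝ᵥ ω = u)
    (hv : ζ ⬝ᵥ ω = v) (hw : θ ⬝ᵥ ω = w) (huP : u ∈ P) (hvP : v ∈ P) (hwP : w ∉ P) :
    ζ ⬝ᵥ (ξ ᵥ* ν) ∈ P := by
  refine (hP.mem_or_mem ?_).resolve_left hwP
  have h₃ := contract₃_wedge₂_mem hν ξ ζ θ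
  rw [hu, hv, hw] at h₃
  have := P.add_mem (P.sub_mem h₃ (P.mul_mem_right (θ ⬝ᵥ (ζ ᵥ* ν)) huP))
    (P.mul_mem_right (θ ⬝ᵥ (ξ ᵥ* ν)) hvP)
  convert this using 1; ring

end Division

namespace IsPrimeSequence

variable {R : Type*} [CommRing R] {ι : Type*} [Fintype ι] {ω : ι → R} {μ : ι → ι → R}
  {f : ℕ → R} {m : ℕ}

theorem exists_wedge_sub_mem_of_succ_eq (hf : IsPrimeSequence f m)
    (hfω : ∀ k < m, ∃ ξ : ι → R, ξ ⬝ᵥ ω = f k) (hμ : ∀ i j k, wedge₂ ω μ i j k = 0)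
    (hμm : ∀ i j, μ i j ∈ prefixSpan f m) {k : ℕ} (hk : k + 1 = m) :
    ∃ η : ι → R, ∀ i j, μ i j - wedge ω η i j ∈ prefixSpan f k := by
  obtain ⟨ξ, hξ⟩ := hfω k (by omega)
  refine exists_wedge_sub_mem_of_contract (hf.isPrime k (by omega))
    (fun i j l => (hμ i j l).symm ▸ Ideal.zero_mem _) hξ (hf.notMem k (by omega)) (β := 0)
    fun l => ?_
  rw [zero_mul, sub_zero, ← prefixSpan_succ, hk]
  exact dotProduct_mem ξ fun i => hμm i l

theorem exists_wedge_sub_mem_of_add_two_eq (hf : IsPrimeSequence f m)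
    (hfω : ∀ k < m, ∃ ξ : ι → R, ξ ⬝ᵥ ω = f k) (hμ : ∀ i j k, wedge₂ ω μ i j k = 0)
    (hμm : ∀ i j, μ i j ∈ prefixSpan f m) {k : ℕ} (hk : k + 2 = m) :
    ∃ η : ι → R, ∀ i j, μ i j - wedge ω η i j ∈ prefixSpan f k := by
  obtain ⟨ξ, hξ⟩ := hfω k (by omega)
  obtain ⟨ζ, hζ⟩ := hfω (k + 1) (by omega)
  refine exists_wedge_sub_mem_of_contract₂ (hf.isPrime k (by omega))
    (fun i j l => (hμ i j l).symm ▸ Ideal.zero_mem _) hξ hζ (hf.notMem k (by omega)) ?_ ?_ ?_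
  · rw [← prefixSpan_succ]; exact hf.isPrime (k + 1) (by omega)
  · rw [← prefixSpan_succ]; exact hf.notMem (k + 1) (by omega)
  · rw [← prefixSpan_succ, ← prefixSpan_succ, hk]
    exact dotProduct_mem ζ fun j => dotProduct_mem ξ fun i => hμm i j

theorem exists_wedge_sub_mem_of_succ (hf : IsPrimeSequence f m)
    (hfω : ∀ k < m, ∃ ξ : ι → R, ξ ⬝ᵥ ω = f k) (hμ : ∀ i j k, wedge₂ ω μ i j k = 0)
    {k : ℕ} (hk : k + 3 ≤ m) {η : ι → R}
    (hη : ∀ i j, μ i j - wedge ω η i j ∈ prefixSpan f (k + 1)) :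
    ∃ η' : ι → R, ∀ i j, μ i j - wedge ω η' i j ∈ prefixSpan f k := by
  have hPk := hf.isPrime k (by omega)
  simp only [prefixSpan_succ] at hη
  obtain ⟨p, ν, hp, hdec, hν⟩ :=
    exists_wedge₂_mem_of_sub_wedge_mem hPk hμ (hf.notMem k (by omega)) hη
  obtain ⟨ξ, hξ⟩ := hfω k (by omega)
  obtain ⟨ζ, hζ⟩ := hfω (k + 1) (by omega)
  obtain ⟨θ, hθ⟩ := hfω (k + 2) (by omega)
  have hc : ζ ⬝ᵥ (ξ ᵥ* ν) ∈ prefixSpan f (k + 2) :=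
    contract₂_mem_of_contract₃ (hf.isPrime (k + 2) (by omega))
      (fun i j l => prefixSpan_mono (by omega) (hν i j l)) hξ hζ hθ
      (apply_mem_prefixSpan (by omega)) (apply_mem_prefixSpan (by omega))
      (hf.notMem (k + 2) (by omega))
  obtain ⟨χ, hχ⟩ := exists_wedge_sub_mem_of_contract₂ hPk hν hξ hζ (hf.notMem k (by omega))
    (by rw [← prefixSpan_succ]; exact hf.isPrime (k + 1) (by omega))
    (by rw [← prefixSpan_succ]; exact hf.notMem (k + 1) (by omega))
    (by rwa [← prefixSpan_succ, ← prefixSpan_succ])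
  refine ⟨η + f k • χ, fun i j => ?_⟩
  have key : μ i j - wedge ω (η + f k • χ) i j = p i j + f k * (ν i j - wedge ω χ i j) := by
    have := hdec i j
    simp only [wedge, Pi.add_apply, Pi.smul_apply, smul_eq_mul] at this ⊢
    linear_combination this
  rw [key]
  exact Ideal.add_mem _ (hp i j) (Ideal.mul_mem_left _ _ (hχ i j))

/- Descend from `μ ≡ ω ∧ η mod (f₀, …, f_{k-1})` at `k = m - 2` down to `k = 0`; each step uses
the three generators `f k, f (k+1), f (k+2)`, which is why the top two levels are done directly. -/
theorem exists_eq_wedge (hf : IsPrimeSequence f m)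
    (hfω : ∀ k < m, ∃ ξ : ι → R, ξ ⬝ᵥ ω = f k) (hμ : ∀ i j k, wedge₂ ω μ i j k = 0)
    (hμm : ∀ i j, μ i j ∈ prefixSpan f m) : ∃ η : ι → R, μ = wedge ω η := by
  suffices h : ∃ η : ι → R, ∀ i j, μ i j - wedge ω η i j ∈ prefixSpan f 0 by
    obtain ⟨η, hη⟩ := h
    exact ⟨η, funext₂ fun i j => sub_eq_zero.mp (by simpa using hη i j)⟩
  match m, hf, hfω, hμm with
  | 0, _, _, hμm => exact ⟨0, fun i j => by simpa [wedge] using hμm i j⟩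
  | 1, hf, hfω, hμm => exact hf.exists_wedge_sub_mem_of_succ_eq hfω hμ hμm rfl
  | k + 2, hf, hfω, hμm =>
    exact Nat.decreasingInduction (motive := fun j _ => ∃ η : ι → R,
        ∀ i j', μ i j' - wedge ω η i j' ∈ prefixSpan f j)
      (fun j hj ⟨_, hη⟩ => hf.exists_wedge_sub_mem_of_succ hfω hμ (by omega) hη)
      (hf.exists_wedge_sub_mem_of_add_two_eq hfω hμ hμm rfl) (Nat.zero_le k)

end IsPrimeSequence

section Saturation

variable {R : Type*} [CommRing R]

def saturationAt (q : Ideal R) [q.IsPrime] (I : Ideal R) : Ideal R :=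
  (I.map (algebraMap R (Localization.AtPrime q))).comap (algebraMap R (Localization.AtPrime q))

variable {q I J : Ideal R} [q.IsPrime]

theorem mem_saturationAt {z : R} : z ∈ saturationAt q I ↔ ∃ s ∉ q, s * z ∈ I :=
  IsLocalization.algebraMap_mem_map_algebraMap_iff q.primeCompl _ I z

theorem le_saturationAt : I ≤ saturationAt q I := Ideal.le_comap_map

theorem saturationAt_mono (h : I ≤ J) : saturationAt q I ≤ saturationAt q J :=
  Ideal.comap_mono (Ideal.map_mono h)

theorem saturationAt_le (h : I ≤ q) : saturationAt q I ≤ q := fun z hz => by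
  obtain ⟨s, hs, hsz⟩ := mem_saturationAt.mp hz
  exact (‹q.IsPrime›.mem_or_mem (h hsz)).resolve_left hs

theorem mem_saturationAt_of_mul_mem {s z : R} (hs : s ∉ q) (h : s * z ∈ saturationAt q I) :
    z ∈ saturationAt q I := by
  obtain ⟨t, ht, htsz⟩ := mem_saturationAt.mp h
  exact mem_saturationAt.mpr ⟨t * s, fun h => (‹q.IsPrime›.mem_or_mem h).elim ht hs,
    mul_assoc t s z ▸ htsz⟩

end Saturation

/- Says that the images of `F` in `R_q` form a prime sequence generating the maximal ideal
(`IsPrimeSequenceAt.isPrimeSequence`, `IsPrimeSequenceAt.prefixSpan_eq`), but phrased in `R` so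
that it can be transported along `W → W[X]`. -/
structure IsPrimeSequenceAt {R : Type*} [CommRing R] (q : Ideal R) [q.IsPrime] (F : ℕ → R)
    (m : ℕ) : Prop where
  isPrime : ∀ k ≤ m, (saturationAt q (prefixSpan F k)).IsPrime
  notMem : ∀ k < m, F k ∉ saturationAt q (prefixSpan F k)
  saturationAt_eq : saturationAt q (prefixSpan F m) = q

def HasPrimeSequences (R : Type*) [CommRing R] : Prop :=
  ∀ (q : Ideal R) [q.IsPrime], ∃ F m, IsPrimeSequenceAt q F m

section PolynomialStep

open scoped Polynomial

variable {W : Type*} [CommRing W]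

theorem Polynomial.C_mem_map_C_iff {I : Ideal W} {a : W} :
    Polynomial.C a ∈ I.map (Polynomial.C : W →+* W[X]) ↔ a ∈ I := by
  refine ⟨fun h => by simpa using Ideal.mem_map_C_iff.mp h 0, fun h => Ideal.mem_map_of_mem _ h⟩

theorem Polynomial.natDegree_C_leadingCoeff_mul_sub_lt [IsDomain W] {G z : W[X]}
    (hG : 0 < G.natDegree) (h : G.natDegree ≤ z.natDegree) :
    (C G.leadingCoeff * z - C z.leadingCoeff * X ^ (z.natDegree - G.natDegree) * G).natDegree
      < z.natDegree := by
  have hG0 : G ≠ 0 := ne_zero_of_natDegree_gt hG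
  have hz0 : z ≠ 0 := ne_zero_of_natDegree_gt (hG.trans_le h)
  have h₁ : (C G.leadingCoeff * z).degree = z.degree :=
    degree_C_mul (leadingCoeff_ne_zero.mpr hG0)
  have h₂ : (C z.leadingCoeff * X ^ (z.natDegree - G.natDegree) * G).degree = z.degree := by
    rw [degree_mul, degree_C_mul_X_pow _ (leadingCoeff_ne_zero.mpr hz0),
      degree_eq_natDegree hG0, degree_eq_natDegree hz0, ← Nat.cast_add, Nat.sub_add_cancel h]
  rcases eq_or_ne (C G.leadingCoeff * z - C z.leadingCoeff * X ^ (z.natDegree - G.natDegree) * G)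
    0 with h0 | h0
  · rw [h0, natDegree_zero]; omega
  refine natDegree_lt_natDegree h0 (h₁ ▸ degree_sub_lt_left (h₁.trans h₂.symm) ?_ ?_)
  · exact mul_ne_zero (by simpa using hG0) hz0
  · rw [leadingCoeff_mul, leadingCoeff_mul, leadingCoeff_C_mul_X_pow, leadingCoeff_C, mul_comm]

variable {Q : Ideal W[X]}

theorem exists_minimal_of_not_le_map_C (hQ : ¬ Q ≤ (Q.comap Polynomial.C).map Polynomial.C) :
    ∃ G ∈ Q, G.leadingCoeff ∉ Q.comap Polynomial.C ∧
      ∀ r ∈ Q, r.natDegree < G.natDegree → r ∈ (Q.comap Polynomial.C).map Polynomial.C := by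
  set Q' := Q.comap (Polynomial.C : W →+* W[X])
  obtain ⟨G, ⟨hGQ, hGQ'⟩, hGmin⟩ := (measure Polynomial.natDegree).wf.has_min
    {G | G ∈ Q ∧ G ∉ Q'.map Polynomial.C} (Set.not_subset.mp hQ)
  have hmin : ∀ r ∈ Q, r.natDegree < G.natDegree → r ∈ Q'.map Polynomial.C :=
    fun r hr hlt => by_contra fun hr' => hGmin r ⟨hr, hr'⟩ hlt
  refine ⟨G, hGQ, fun hlc => ?_, hmin⟩
  have hsplit := Polynomial.eraseLead_add_C_mul_X_pow G
  have hlcX : Polynomial.C G.leadingCoeff * Polynomial.X ^ G.natDegree ∈ Q'.map Polynomial.C :=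
    Ideal.mul_mem_right _ _ (Ideal.mem_map_of_mem _ hlc)
  have herase : G.eraseLead ∉ Q'.map Polynomial.C := fun h =>
    hGQ' (hsplit ▸ Ideal.add_mem _ h hlcX)
  refine herase (hmin _ ?_ ?_)
  · rw [← sub_eq_of_eq_add hsplit.symm]
    exact Q.sub_mem hGQ (Q.mul_mem_right _ hlc)
  · rcases G.eraseLead_natDegree_lt_or_eraseLead_eq_zero with h | h
    · exact h
    · exact absurd (h ▸ Ideal.zero_mem _) herase

variable [Q.IsPrime]

theorem saturationAt_map_C {I : Ideal W} (hI : I ≤ Q.comap Polynomial.C)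
    (hprime : (saturationAt (Q.comap Polynomial.C) I).IsPrime) :
    saturationAt Q (I.map Polynomial.C) =
      (saturationAt (Q.comap Polynomial.C) I).map Polynomial.C := by
  have hPQ : (saturationAt (Q.comap Polynomial.C) I).map Polynomial.C ≤ Q :=
    Ideal.map_le_iff_le_comap.mpr (saturationAt_le hI)
  refine le_antisymm (fun z hz => ?_) (Ideal.map_le_iff_le_comap.mpr fun a ha => ?_)
  · obtain ⟨s, hs, hsz⟩ := mem_saturationAt.mp hz
    have hP := (Ideal.isPrime_map_C_iff_isPrime _).mpr hprime
    exact (hP.mem_or_mem (Ideal.map_mono le_saturationAt hsz)).resolve_left fun h => hs (hPQ h)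
  · obtain ⟨s, hs, hsa⟩ := mem_saturationAt.mp ha
    exact mem_saturationAt.mpr ⟨Polynomial.C s, hs, by
      rw [← map_mul]; exact Ideal.mem_map_of_mem _ hsa⟩

theorem saturationAt_sup_span_eq [IsDomain W] {J : Ideal W[X]}
    (hJ : saturationAt Q J = (Q.comap Polynomial.C).map Polynomial.C) {G : W[X]} (hGQ : G ∈ Q)
    (hlc : G.leadingCoeff ∉ Q.comap Polynomial.C)
    (hmin : ∀ r ∈ Q, r.natDegree < G.natDegree → r ∈ (Q.comap Polynomial.C).map Polynomial.C) :
    saturationAt Q (J ⊔ Ideal.span {G}) = Q := by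
  refine le_antisymm (saturationAt_le (sup_le (le_saturationAt.trans (hJ.trans_le
    Ideal.map_comap_le)) (Ideal.span_le.mpr (Set.singleton_subset_iff.mpr hGQ)))) fun z hz => ?_
  have hG : 0 < G.natDegree := Nat.pos_of_ne_zero fun h0 =>
    hlc (by
      rw [Ideal.mem_comap, Polynomial.leadingCoeff, h0, ← Polynomial.eq_C_of_natDegree_eq_zero h0]
      exact hGQ)
  induction hd : z.natDegree using Nat.strong_induction_on generalizing z with | _ d ih =>
  by_cases hlt : z.natDegree < G.natDegree
  · exact saturationAt_mono le_sup_left (hJ ▸ hmin z hz hlt)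
  set e := z.natDegree - G.natDegree
  set z' := Polynomial.C G.leadingCoeff * z - Polynomial.C z.leadingCoeff * Polynomial.X ^ e * G
  have hz' : z' ∈ Q := Q.sub_mem (Q.mul_mem_left _ hz) (Q.mul_mem_left _ hGQ)
  have hz'd := Polynomial.natDegree_C_leadingCoeff_mul_sub_lt hG (not_lt.mp hlt)
  refine mem_saturationAt_of_mul_mem hlc ?_
  rw [show Polynomial.C G.leadingCoeff * z = z' + Polynomial.C z.leadingCoeff * Polynomial.X ^ e * G
    by ring]
  exact Ideal.add_mem _ (ih _ (hd ▸ hz'd) z' hz' rfl) (Ideal.mul_mem_left _ _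
    (le_saturationAt (Ideal.mem_sup_right (Ideal.mem_span_singleton_self G))))

namespace IsPrimeSequenceAt

variable {F : ℕ → W} {m : ℕ} {F' : ℕ → W[X]}

theorem saturationAt_prefixSpan_map_C (t : IsPrimeSequenceAt (Q.comap Polynomial.C) F m)
    (hF' : ∀ j < m, F' j = Polynomial.C (F j)) {k : ℕ} (hk : k ≤ m) :
    saturationAt Q (prefixSpan F' k) =
      (saturationAt (Q.comap Polynomial.C) (prefixSpan F k)).map Polynomial.C := by
  rw [prefixSpan_congr (g := Polynomial.C ∘ F) fun j hj => hF' j (by omega), ← map_prefixSpan]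
  exact saturationAt_map_C
    ((prefixSpan_mono hk).trans (le_saturationAt.trans t.saturationAt_eq.le)) (t.isPrime k hk)

theorem isPrime_map_C (t : IsPrimeSequenceAt (Q.comap Polynomial.C) F m)
    (hF' : ∀ j < m, F' j = Polynomial.C (F j)) {k : ℕ} (hk : k ≤ m) :
    (saturationAt Q (prefixSpan F' k)).IsPrime := by
  rw [t.saturationAt_prefixSpan_map_C hF' hk]
  exact (Ideal.isPrime_map_C_iff_isPrime _).mpr (t.isPrime k hk)

theorem notMem_map_C (t : IsPrimeSequenceAt (Q.comap Polynomial.C) F m)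
    (hF' : ∀ j < m, F' j = Polynomial.C (F j)) {k : ℕ} (hk : k < m) :
    F' k ∉ saturationAt Q (prefixSpan F' k) := by
  rw [t.saturationAt_prefixSpan_map_C hF' hk.le, hF' k hk, Polynomial.C_mem_map_C_iff]
  exact t.notMem k hk

/- Either `Q = (Q ∩ W)[X]`, or one more generator is needed: a polynomial `G ∈ Q` of least degree
outside `(Q ∩ W)[X]`, whose leading coefficient lies outside `Q`. -/
theorem exists_of_comap_C [IsDomain W] (t : IsPrimeSequenceAt (Q.comap Polynomial.C) F m) :
    ∃ F' m', IsPrimeSequenceAt Q F' m' := by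
  by_cases hQ : Q ≤ (Q.comap Polynomial.C).map Polynomial.C
  · have hF' : ∀ j < m, (Polynomial.C ∘ F) j = Polynomial.C (F j) := fun _ _ => rfl
    refine ⟨Polynomial.C ∘ F, m, fun k hk => t.isPrime_map_C hF' hk,
      fun k hk => t.notMem_map_C hF' hk, ?_⟩
    rw [t.saturationAt_prefixSpan_map_C hF' le_rfl, t.saturationAt_eq]
    exact le_antisymm Ideal.map_comap_le hQ
  obtain ⟨G, hGQ, hlc, hmin⟩ := exists_minimal_of_not_le_map_C hQ
  set F' := Function.update (Polynomial.C ∘ F) m G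
  have hF' : ∀ j < m, F' j = Polynomial.C (F j) := fun j hj => Function.update_of_ne hj.ne _ _
  have hFm : F' m = G := Function.update_self _ _ _
  have hm : saturationAt Q (prefixSpan F' m) = (Q.comap Polynomial.C).map Polynomial.C := by
    rw [t.saturationAt_prefixSpan_map_C hF' le_rfl, t.saturationAt_eq]
  have htop : saturationAt Q (prefixSpan F' (m + 1)) = Q := by
    rw [prefixSpan_succ, hFm]
    exact saturationAt_sup_span_eq hm hGQ hlc hmin
  refine ⟨F', m + 1, fun k hk => ?_, fun k hk => ?_, htop⟩
  · rcases Nat.lt_or_eq_of_le hk with hk | rfl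
    · exact t.isPrime_map_C hF' (by omega)
    · rw [htop]; infer_instance
  · rcases Nat.lt_or_eq_of_le (Nat.le_of_lt_succ hk) with hk | rfl
    · exact t.notMem_map_C hF' hk
    · rw [hm, hFm]
      exact fun h => hlc (Ideal.mem_map_C_iff.mp h _)

end IsPrimeSequenceAt

theorem HasPrimeSequences.polynomial [IsDomain W] (h : HasPrimeSequences W) :
    HasPrimeSequences W[X] := fun Q _ =>
  have ⟨_, _, t⟩ := h (Q.comap Polynomial.C)
  t.exists_of_comap_C

end PolynomialStep

theorem saturationAt_map_ringEquiv {R S : Type*} [CommRing R] [CommRing S] (e : R ≃+* S)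
    {q : Ideal S} [q.IsPrime] (I : Ideal R) :
    saturationAt q (I.map e) = (saturationAt (q.comap e) I).map e := by
  ext z
  rw [mem_saturationAt, ← Ideal.symm_apply_mem_of_equiv_iff, mem_saturationAt,
    e.surjective.exists]
  simp [← Ideal.symm_apply_mem_of_equiv_iff]

theorem HasPrimeSequences.of_ringEquiv {R S : Type*} [CommRing R] [CommRing S] (e : R ≃+* S)
    (h : HasPrimeSequences R) : HasPrimeSequences S := fun q _ => by
  obtain ⟨F, m, t⟩ := h (q.comap e)
  refine ⟨e ∘ F, m, fun k hk => ?_, fun k hk => ?_, ?_⟩ <;>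
    rw [← map_prefixSpan, saturationAt_map_ringEquiv]
  · have := t.isPrime k hk; infer_instance
  · simpa using t.notMem k hk
  · rw [t.saturationAt_eq, Ideal.map_comap_eq_self_of_equiv]

theorem hasPrimeSequences_of_field (K : Type*) [Field K] : HasPrimeSequences K := fun q _ => by
  obtain rfl := Ideal.eq_bot_of_prime q
  have h0 : saturationAt ⊥ (prefixSpan (0 : ℕ → K) 0) = ⊥ := by simp [saturationAt]
  exact ⟨0, 0, fun k hk => by rwa [Nat.le_zero.mp hk, h0], fun k hk => absurd hk k.not_lt_zero, h0⟩

theorem hasPrimeSequences_mvPolynomial (K : Type*) [Field K] (N : ℕ) :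
    HasPrimeSequences (MvPolynomial (Fin N) K) := by
  induction N with
  | zero => exact (hasPrimeSequences_of_field K).of_ringEquiv (isEmptyRingEquiv K (Fin 0)).symm
  | succ N ih => exact ih.polynomial.of_ringEquiv (finSuccEquiv K N).toRingEquiv.symm

namespace IsPrimeSequenceAt

variable {R : Type*} [CommRing R] {q : Ideal R} [q.IsPrime] {F : ℕ → R} {m : ℕ}

theorem isPrimeSequence (t : IsPrimeSequenceAt q F m) :
    IsPrimeSequence (algebraMap R (Localization.AtPrime q) ∘ F) m where
  isPrime k hk := by
    rw [← map_prefixSpan, IsLocalization.isPrime_iff_isPrime_disjoint q.primeCompl]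
    refine ⟨t.isPrime k hk, Set.disjoint_left.mpr fun s hs hsq => hs ?_⟩
    refine saturationAt_le ((prefixSpan_mono hk).trans ?_) hsq
    exact le_saturationAt.trans t.saturationAt_eq.le
  notMem k hk := by
    rw [← map_prefixSpan]
    exact t.notMem k hk

theorem prefixSpan_eq (t : IsPrimeSequenceAt q F m) :
    prefixSpan (algebraMap R (Localization.AtPrime q) ∘ F) m =
      q.map (algebraMap R (Localization.AtPrime q)) := by
  rw [← map_prefixSpan, ← IsLocalization.map_under q.primeCompl _ (Ideal.map _ _)]
  exact congrArg _ t.saturationAt_eq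

end IsPrimeSequenceAt

theorem exists_mul_eq_wedge_of_isLocalization {S A ι : Type*} [CommRing S] [CommRing A]
    [Algebra S A] (M : Submonoid S) [IsLocalization M A] (hM : M ≤ nonZeroDivisors S) [Finite ι]
    {ω : ι → S} {μ : ι → ι → S} {η : ι → A}
    (h : ∀ i j, algebraMap S A (μ i j) = wedge (algebraMap S A ∘ ω) η i j) :
    ∃ b ∈ M, ∃ g : ι → S, ∀ i j, b * μ i j = wedge ω g i j := by
  obtain ⟨b, hb⟩ := IsLocalization.exist_integer_multiples_of_finite M η
  choose g hg using hb
  refine ⟨b, b.2, g, fun i j => IsLocalization.injective A hM ?_⟩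
  simp only [wedge, map_mul, map_sub, hg, h, Algebra.smul_def, Function.comp_apply]
  ring

theorem exists_mul_eq_wedge_of_mem_minimalPrimes {S ι : Type*} [CommRing S] [IsDomain S]
    (hS : HasPrimeSequences S) [Fintype ι] {ω : ι → S} {μ : ι → ι → S}
    (hμ : ∀ i j k, wedge₂ ω μ i j k = 0) (hrad : (Ideal.span (Set.range ω)).IsRadical)
    {q : Ideal S} (hq : q ∈ (Ideal.span (Set.range ω)).minimalPrimes) (hμq : ∀ i j, μ i j ∈ q) :
    ∃ b ∉ q, ∃ g : ι → S, ∀ i j, b * μ i j = wedge ω g i j := by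
  have := hq.1.1
  set φ := algebraMap S (Localization.AtPrime q)
  obtain ⟨F, m, t⟩ := hS q
  have hspan : Ideal.span (Set.range (φ ∘ ω)) = prefixSpan (φ ∘ F) m := by
    rw [t.prefixSpan_eq, Set.range_comp, ← Ideal.map_span, ← hrad.radical,
      IsLocalization.map_radical q.primeCompl,
      IsLocalization.AtPrime.radical_map_of_mem_minimalPrimes _ q _ hq]
  have hfω : ∀ k < m, ∃ ξ, ξ ⬝ᵥ (φ ∘ ω) = (φ ∘ F) k := fun k hk => by
    have := hspan ▸ apply_mem_prefixSpan hk
    exact (Submodule.mem_span_range_iff_exists_fun _).mp this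
  have hμ' : ∀ i j k, wedge₂ (φ ∘ ω) (fun i j => φ (μ i j)) i j k = 0 := fun i j k => by
    simpa [wedge₂] using congrArg φ (hμ i j k)
  obtain ⟨η, hη⟩ := t.isPrimeSequence.exists_eq_wedge hfω hμ'
    fun i j => t.prefixSpan_eq ▸ Ideal.mem_map_of_mem φ (hμq i j)
  exact exists_mul_eq_wedge_of_isLocalization q.primeCompl q.primeCompl_le_nonZeroDivisors
    fun i j => congrFun₂ hη i j

section Colon

variable {R : Type*} [CommRing R] {J : Ideal R}

theorem Ideal.IsRadical.colon_pow (hJ : J.IsRadical) (K : Ideal R) {d : ℕ} (hd : d ≠ 0) :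
    J.colon (K ^ d : Ideal R) = J.colon K := by
  refine le_antisymm (fun x hx => Submodule.mem_colon.mpr fun k hk => ?_)
    (Submodule.colon_mono le_rfl (Ideal.pow_le_self hd))
  obtain ⟨d, rfl⟩ := Nat.exists_eq_succ_of_ne_zero hd
  have hxk : x * k ^ (d + 1) ∈ J := Submodule.mem_colon.mp hx _ (Ideal.pow_mem_pow hk _)
  exact hJ ⟨d + 1, by rw [smul_eq_mul, mul_pow, pow_succ x, mul_assoc]; exact J.mul_mem_left _ hxk⟩

theorem Ideal.colon_le_of_not_le {C p : Ideal R} (hp : p.IsPrime) (hJ : J ≤ p) (hC : ¬ C ≤ p) :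
    J.colon C ≤ p := fun x hx => by
  obtain ⟨c, hc, hcp⟩ := SetLike.not_le_iff_exists.mp hC
  exact (hp.mem_or_mem (hJ (Submodule.mem_colon.mp hx c hc))).resolve_right hcp

theorem Ideal.IsRadical.colon_le_colon {I K : Ideal R} (hJ : J.IsRadical)
    (h : ∀ p ∈ J.minimalPrimes, ¬ I ≤ p ∨ K ≤ p) : J.colon I ≤ J.colon K := by
  refine fun x hx => Submodule.mem_colon.mpr fun k hk => ?_
  rw [smul_eq_mul, ← hJ.radical, ← Ideal.sInf_minimalPrimes]
  refine Ideal.mem_sInf.mpr fun p hp => ?_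
  rcases h p hp with hI | hK
  · obtain ⟨f, hf, hfp⟩ := SetLike.not_le_iff_exists.mp hI
    have hxf : x * f ∈ p := hp.1.2 (Submodule.mem_colon.mp hx f hf)
    exact p.mul_mem_right _ ((hp.1.1.mem_or_mem hxf).resolve_right hfp)
  · exact p.mul_mem_left _ (hK hk)

end Colon

section Foliation

variable {n : ℕ} {ω : Fin (n+1) → PolyS n}

theorem Iideal_le_Kideal : Iideal ω ≤ Kideal ω := by
  rintro h ⟨η, hη⟩
  rw [Kideal, Cdiff, Ideal.colon_span, Submodule.mem_colon]
  rintro _ ⟨i, j, rfl⟩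
  rw [smul_eq_mul, hη i j]
  exact Ideal.sub_mem _ (Ideal.mul_mem_right _ _ (Ideal.subset_span ⟨i, rfl⟩))
    (Ideal.mul_mem_right _ _ (Ideal.subset_span ⟨j, rfl⟩))

theorem Lideal_eq_colon_Kideal (hrad : (Jideal ω).IsRadical) :
    Lideal ω = (Jideal ω).colon (Kideal ω) := by
  simp only [Lideal, hrad.colon_pow _ (Nat.succ_ne_zero _), ciSup_const]

theorem not_Iideal_le_of_mem_minimalPrimes (hint : Integrable ω) (hrad : (Jideal ω).IsRadical)
    {p : Ideal (PolyS n)} (hp : p ∈ (Jideal ω).minimalPrimes) (hC : Cdiff ω ≤ p) :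
    ¬ Iideal ω ≤ p := fun hle => by
  obtain ⟨b, hb, g, hg⟩ := exists_mul_eq_wedge_of_mem_minimalPrimes
    (hasPrimeSequences_mvPolynomial ℂ (n + 1)) hint hrad hp
    fun i j => hC (Ideal.subset_span ⟨i, j, rfl⟩)
  exact hb (hle ⟨g, hg⟩)

end Foliation

/-- If `ω ∈ ℱ¹(ℙⁿ,e)` and `J(ω)` is radical, then
`(J(ω) : I(ω)) = (J(ω) : K(ω)) = L(ω)`; in particular the annihilator `(J(ω) : I(ω))` of
`I(ω)/J(ω)` equals `L(ω)`, so the minimal primes of the support of `I(ω)/J(ω)` coincide with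
the minimal primes over `L(ω)`. -/
theorem stmt5 (n e : ℕ) (ω : Fin (n+1) → PolyS n) (hfol : IsFoliation n e ω)
    (hrad : (Jideal ω).IsRadical) :
    (Jideal ω).colon (Iideal ω) = Lideal ω ∧
    (Jideal ω).colon (Kideal ω) = Lideal ω ∧
    ((Jideal ω).colon (Iideal ω)).minimalPrimes = (Lideal ω).minimalPrimes := by
  obtain ⟨-, -, -, hint, -, -⟩ := hfol
  have hLK := Lideal_eq_colon_Kideal hrad
  have hIK : (Jideal ω).colon (Iideal ω) = (Jideal ω).colon (Kideal ω) := by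
    refine le_antisymm (hrad.colon_le_colon fun p hp => ?_)
      (Submodule.colon_mono le_rfl Iideal_le_Kideal)
    by_cases hC : Cdiff ω ≤ p
    · exact Or.inl (not_Iideal_le_of_mem_minimalPrimes hint hrad hp hC)
    · exact Or.inr (Ideal.colon_le_of_not_le hp.1.1 hp.1.2 hC)
  exact ⟨hIK.trans hLK.symm, hLK.symm, by rw [hIK, hLK]⟩

end
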